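/- arXiv:2204.05150 — 6 statements merged into one kernel-verified Lean document; each statement's English description precedes it below -/
import Mathlib

section
/- Let H be a nonzero complex Hilbert space and let B, C be bounded linear operators on H. Then (1/2)·w(B² + C²) + (1/2)·max{w(B), w(C)}·| w(B + C) − w(B − C) | ≤ w_e(B, C)². -/
open scoped InnerProductSpace
open ContinuousLinearMap

variable {H : Type*} [NormedAddCommGroup H] [InnerProductSpace ℂ H]
  [CompleteSpace H] [Nontrivial H]

/-- The numerical radius of a bounded linear operator. -/
noncomputable def numRad (A : H →L[ℂ] H) : ℝ :=
  ⨆ x : {x : H // ‖x‖ = 1}, ‖⟪A x.1, x.1⟫_ℂ‖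

/-- The Crawford number of a bounded linear operator. -/
noncomputable def crawford (A : H →L[ℂ] H) : ℝ :=
  ⨅ x : {x : H // ‖x‖ = 1}, ‖⟪A x.1, x.1⟫_ℂ‖

/-- The Euclidean operator radius of a pair of bounded linear operators. -/
noncomputable def euclRad (B C : H →L[ℂ] H) : ℝ :=
  ⨆ x : {x : H // ‖x‖ = 1}, Real.sqrt (‖⟪B x.1, x.1⟫_ℂ‖ ^ 2 + ‖⟪C x.1, x.1⟫_ℂ‖ ^ 2)

/-- The absolute value `|A| = (A*A)^(1/2)` of a bounded linear operator. -/
noncomputable def opAbs (A : H →L[ℂ] H) : H →L[ℂ] H := CFC.sqrt (adjoint A * A)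

/-- The real part `Re(A) = (A + A*)/2` of a bounded linear operator. -/
noncomputable def reOp (A : H →L[ℂ] H) : H →L[ℂ] H := (2 : ℂ)⁻¹ • (A + adjoint A)

/-- The imaginary part `Im(A) = (A - A*)/(2i)` of a bounded linear operator. -/
noncomputable def imOp (A : H →L[ℂ] H) : H →L[ℂ] H := (2 * Complex.I)⁻¹ • (A - adjoint A)

/-!
Write `P = B + C` and `Q = B - C`. From `P² + Q² = 2 (B² + C²)` and the power inequality
`w(T²) ≤ w(T)²` we get `w(B² + C²) ≤ (w(P)² + w(Q)²) / 2`, and from `2B = P + Q`, `2C = P - Q` we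
get `2 max {w(B), w(C)} ≤ w(P) + w(Q)`. So the left-hand side is at most
`(w(P)² + w(Q)² + (w(P) + w(Q)) |w(P) - w(Q)|) / 4 = max {w(P), w(Q)}² / 2`, and
`w(B ± C) ≤ √2 w_e(B, C)` by Cauchy–Schwarz in `ℝ²`.

For the power inequality, `G = S + S*` is self-adjoint, so `‖G x‖ ≤ ‖G‖ ≤ w(G) ≤ 2 w(S)`, while
`‖G x‖² = ‖S x‖² + ‖S* x‖² + 2 Re ⟨S² x, x⟩ ≥ ‖G x‖² / 2 + 2 Re ⟨S² x, x⟩`. Hence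
`Re ⟨S² x, x⟩ ≤ w(S)²`, and replacing `S` by a unimodular multiple turns the real part into the
modulus.
-/

section NumericalRadius

variable {E : Type*} [NormedAddCommGroup E] [InnerProductSpace ℂ E]

lemma norm_inner_apply_self_le_opNorm (A : E →L[ℂ] E) {x : E} (hx : ‖x‖ = 1) :
    ‖⟪A x, x⟫_ℂ‖ ≤ ‖A‖ := by
  simpa [hx] using (norm_inner_le_norm (A x) x).trans
    (mul_le_mul_of_nonneg_right (A.le_opNorm x) (norm_nonneg x))

lemma bddAbove_range_norm_inner_apply_self (A : E →L[ℂ] E) :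
    BddAbove (Set.range fun x : {x : E // ‖x‖ = 1} => ‖⟪A x.1, x.1⟫_ℂ‖) :=
  ⟨‖A‖, by rintro _ ⟨x, rfl⟩; exact norm_inner_apply_self_le_opNorm A x.2⟩

lemma norm_inner_apply_self_le_numRad (A : E →L[ℂ] E) {x : E} (hx : ‖x‖ = 1) :
    ‖⟪A x, x⟫_ℂ‖ ≤ numRad A :=
  le_ciSup (bddAbove_range_norm_inner_apply_self A) ⟨x, hx⟩

lemma norm_inner_apply_smul_self (A : E →L[ℂ] E) (c : ℂ) (x : E) :
    ‖⟪A (c • x), c • x⟫_ℂ‖ = ‖c‖ ^ 2 * ‖⟪A x, x⟫_ℂ‖ := by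
  simp only [map_smul, inner_smul_left, inner_smul_right, norm_mul, RCLike.norm_conj]
  ring

lemma norm_inner_apply_self_le_numRad_mul_sq (A : E →L[ℂ] E) (y : E) :
    ‖⟪A y, y⟫_ℂ‖ ≤ numRad A * ‖y‖ ^ 2 := by
  rcases eq_or_ne y 0 with rfl | hy
  · simp
  have hy' : ‖y‖ ≠ 0 := norm_ne_zero_iff.mpr hy
  have hunit : ‖(‖y‖ : ℂ)⁻¹ • y‖ = 1 := by
    rw [norm_smul, norm_inv, Complex.norm_real, norm_norm, inv_mul_cancel₀ hy']
  have hy_eq : y = (‖y‖ : ℂ) • ((‖y‖ : ℂ)⁻¹ • y) := by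
    rw [smul_smul, mul_inv_cancel₀ (by exact_mod_cast hy'), one_smul]
  conv_lhs => rw [hy_eq, norm_inner_apply_smul_self, Complex.norm_real, norm_norm]
  rw [mul_comm]
  gcongr
  exact norm_inner_apply_self_le_numRad A hunit

lemma numRad_smul (c : ℂ) (A : E →L[ℂ] E) : numRad (c • A) = ‖c‖ * numRad A := by
  simp only [numRad, smul_apply, inner_smul_left, norm_mul, RCLike.norm_conj]
  exact (Real.mul_iSup_of_nonneg (norm_nonneg c) _).symm

lemma numRad_neg (A : E →L[ℂ] E) : numRad (-A) = numRad A := by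
  simp only [numRad, neg_apply, inner_neg_left, norm_neg]

lemma numRad_adjoint [CompleteSpace E] (A : E →L[ℂ] E) : numRad (adjoint A) = numRad A := by
  simp only [numRad, adjoint_inner_left, ← inner_conj_symm (A _), RCLike.norm_conj]

variable [Nontrivial E]

instance : Nonempty {x : E // ‖x‖ = 1} :=
  let ⟨x, hx⟩ := exists_norm_eq E zero_le_one; ⟨⟨x, hx⟩⟩

lemma numRad_le {A : E →L[ℂ] E} {M : ℝ} (h : ∀ x : E, ‖x‖ = 1 → ‖⟪A x, x⟫_ℂ‖ ≤ M) :
    numRad A ≤ M :=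
  ciSup_le fun x => h x.1 x.2

lemma numRad_nonneg (A : E →L[ℂ] E) : 0 ≤ numRad A :=
  let ⟨_, hx⟩ := exists_norm_eq E zero_le_one
  (norm_nonneg _).trans (norm_inner_apply_self_le_numRad A hx)

lemma numRad_add_le (A B : E →L[ℂ] E) : numRad (A + B) ≤ numRad A + numRad B :=
  numRad_le fun x hx => by
    rw [add_apply, inner_add_left]
    exact (norm_add_le _ _).trans (add_le_add (norm_inner_apply_self_le_numRad A hx)
      (norm_inner_apply_self_le_numRad B hx))

lemma numRad_sub_le (A B : E →L[ℂ] E) : numRad (A - B) ≤ numRad A + numRad B := by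
  simpa [sub_eq_add_neg, numRad_neg] using numRad_add_le A (-B)

lemma opNorm_le_numRad_of_isSelfAdjoint [CompleteSpace E] {G : E →L[ℂ] E}
    (hG : IsSelfAdjoint G) : ‖G‖ ≤ numRad G := by
  rw [G.norm_eq_iSup_rayleighQuotient hG.isSymmetric]
  refine ciSup_le fun x => ?_
  rw [rayleighQuotient, reApplyInnerSelf_apply, abs_div, abs_sq]
  exact div_le_of_le_mul₀ (sq_nonneg _) (numRad_nonneg G)
    ((RCLike.abs_re_le_norm _).trans (norm_inner_apply_self_le_numRad_mul_sq G x))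

end NumericalRadius

section PowerInequality

variable {E : Type*} [NormedAddCommGroup E] [InnerProductSpace ℂ E] [CompleteSpace E]

lemma norm_add_adjoint_apply_sq (S : E →L[ℂ] E) (x : E) :
    ‖(S + adjoint S) x‖ ^ 2 = ‖S x‖ ^ 2 + ‖adjoint S x‖ ^ 2 + 2 * (⟪(S ^ 2) x, x⟫_ℂ).re := by
  rw [add_apply, norm_add_sq (𝕜 := ℂ), adjoint_inner_right, pow_two S, mul_apply_eq_comp,
    RCLike.re_to_complex]
  ring

variable [Nontrivial E]

lemma re_inner_sq_apply_self_le (S : E →L[ℂ] E) {x : E} (hx : ‖x‖ = 1) :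
    (⟪(S ^ 2) x, x⟫_ℂ).re ≤ numRad S ^ 2 := by
  set G := S + adjoint S
  have hG : ‖G x‖ ≤ 2 * numRad S := calc
    ‖G x‖ ≤ ‖G‖ := by simpa [hx] using G.le_opNorm x
    _ ≤ numRad G := opNorm_le_numRad_of_isSelfAdjoint (IsSelfAdjoint.add_star_self S)
    _ ≤ numRad S + numRad (adjoint S) := numRad_add_le _ _
    _ = 2 * numRad S := by rw [numRad_adjoint]; ring
  have hG' : ‖G x‖ ≤ ‖S x‖ + ‖adjoint S x‖ := norm_add_le _ _
  have hGx := norm_add_adjoint_apply_sq S x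
  nlinarith [sq_nonneg (‖S x‖ - ‖adjoint S x‖), mul_le_mul hG' hG' (norm_nonneg _) (by positivity),
    mul_self_le_mul_self (norm_nonneg _) hG]

lemma numRad_sq_le (A : E →L[ℂ] E) : numRad (A ^ 2) ≤ numRad A ^ 2 := by
  refine numRad_le fun x hx => ?_
  set t := ⟪(A ^ 2) x, x⟫_ℂ
  rcases eq_or_ne t 0 with ht | ht
  · rw [ht, norm_zero]; positivity
  have ht0 : ‖t‖ ≠ 0 := norm_ne_zero_iff.mpr ht
  obtain ⟨c, hc⟩ := IsAlgClosed.exists_pow_nat_eq (t / ‖t‖) two_pos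
  have hc1 : ‖c‖ = 1 := by
    have : ‖c‖ ^ 2 = 1 := by
      rw [← norm_pow, hc, norm_div, Complex.norm_real, norm_norm, div_self ht0]
    exact (pow_eq_one_iff_of_nonneg (norm_nonneg c) two_ne_zero).mp this
  have hrot : ⟪((c • A) ^ 2) x, x⟫_ℂ = ‖t‖ := by
    rw [smul_pow, smul_apply, inner_smul_left, hc, map_div₀, Complex.conj_ofReal,
      div_mul_eq_mul_div, Complex.conj_mul', div_eq_iff (by exact_mod_cast ht0)]
    ring
  calc ‖t‖ = (⟪((c • A) ^ 2) x, x⟫_ℂ).re := by rw [hrot, Complex.ofReal_re]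
    _ ≤ numRad (c • A) ^ 2 := re_inner_sq_apply_self_le _ hx
    _ = numRad A ^ 2 := by rw [numRad_smul, hc1, one_mul]

end PowerInequality

section EuclideanRadius

variable {E : Type*} [NormedAddCommGroup E] [InnerProductSpace ℂ E]

lemma bddAbove_range_sqrt_norm_inner_sq_add (B C : E →L[ℂ] E) :
    BddAbove (Set.range fun x : {x : E // ‖x‖ = 1} =>
      √(‖⟪B x.1, x.1⟫_ℂ‖ ^ 2 + ‖⟪C x.1, x.1⟫_ℂ‖ ^ 2)) :=
  ⟨√(‖B‖ ^ 2 + ‖C‖ ^ 2), by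
    rintro _ ⟨x, rfl⟩
    dsimp only
    gcongr <;> exact norm_inner_apply_self_le_opNorm _ x.2⟩

lemma sqrt_norm_inner_sq_add_le_euclRad (B C : E →L[ℂ] E) {x : E} (hx : ‖x‖ = 1) :
    √(‖⟪B x, x⟫_ℂ‖ ^ 2 + ‖⟪C x, x⟫_ℂ‖ ^ 2) ≤ euclRad B C :=
  le_ciSup (bddAbove_range_sqrt_norm_inner_sq_add B C) ⟨x, hx⟩

lemma euclRad_neg_right (B C : E →L[ℂ] E) : euclRad B (-C) = euclRad B C := by
  simp only [euclRad, neg_apply, inner_neg_left, norm_neg]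

variable [Nontrivial E]

lemma numRad_add_sq_le_two_mul_euclRad_sq (B C : E →L[ℂ] E) :
    numRad (B + C) ^ 2 ≤ 2 * euclRad B C ^ 2 := by
  have h : numRad (B + C) ≤ √2 * euclRad B C := numRad_le fun x hx => by
    set b := ‖⟪B x, x⟫_ℂ‖
    set c := ‖⟪C x, x⟫_ℂ‖
    calc ‖⟪(B + C) x, x⟫_ℂ‖ ≤ b + c := by rw [add_apply, inner_add_left]; exact norm_add_le _ _
      _ ≤ √2 * √(b ^ 2 + c ^ 2) := by
        rw [← Real.sqrt_mul zero_le_two]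
        exact Real.le_sqrt_of_sq_le (by nlinarith [sq_nonneg (b - c)])
      _ ≤ √2 * euclRad B C := by gcongr; exact sqrt_norm_inner_sq_add_le_euclRad B C hx
  calc numRad (B + C) ^ 2 ≤ (√2 * euclRad B C) ^ 2 := by gcongr; exact numRad_nonneg _
    _ = 2 * euclRad B C ^ 2 := by rw [mul_pow, Real.sq_sqrt zero_le_two]

lemma numRad_sub_sq_le_two_mul_euclRad_sq (B C : E →L[ℂ] E) :
    numRad (B - C) ^ 2 ≤ 2 * euclRad B C ^ 2 := by
  simpa [sub_eq_add_neg, euclRad_neg_right] using numRad_add_sq_le_two_mul_euclRad_sq B (-C)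

end EuclideanRadius

theorem stmt0 (B C : H →L[ℂ] H) :
    (1/2) * numRad (B ^ 2 + C ^ 2)
      + (1/2) * max (numRad B) (numRad C) * |numRad (B + C) - numRad (B - C)|
      ≤ (euclRad B C) ^ 2 := by
  set p := numRad (B + C)
  set q := numRad (B - C)
  have hp := numRad_add_sq_le_two_mul_euclRad_sq B C
  have hq := numRad_sub_sq_le_two_mul_euclRad_sq B C
  have htwo (T : H →L[ℂ] H) : 2 * numRad T = numRad (T + T) := by
    rw [← two_smul ℂ, numRad_smul, Complex.norm_two]
  have hsq : 2 * numRad (B ^ 2 + C ^ 2) ≤ p ^ 2 + q ^ 2 := calc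
    2 * numRad (B ^ 2 + C ^ 2) = numRad ((B + C) ^ 2 + (B - C) ^ 2) := by
      rw [htwo]; congr 1; noncomm_ring
    _ ≤ numRad ((B + C) ^ 2) + numRad ((B - C) ^ 2) := numRad_add_le _ _
    _ ≤ p ^ 2 + q ^ 2 := add_le_add (numRad_sq_le _) (numRad_sq_le _)
  have hmax : 2 * max (numRad B) (numRad C) ≤ p + q := by
    rw [mul_max_of_nonneg _ _ zero_le_two]
    refine max_le ?_ ?_
    · calc 2 * numRad B = numRad ((B + C) + (B - C)) := by rw [htwo]; congr 1; abel
        _ ≤ p + q := numRad_add_le _ _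
    · calc 2 * numRad C = numRad ((B + C) - (B - C)) := by rw [htwo]; congr 1; abel
        _ ≤ p + q := numRad_sub_le _ _
  rcases abs_cases (p - q) with ⟨h, hpq⟩ | ⟨h, hpq⟩ <;> rw [h]
  · nlinarith [mul_le_mul_of_nonneg_right hmax hpq]
  · nlinarith [mul_le_mul_of_nonneg_right hmax (by linarith : (0 : ℝ) ≤ q - p)]
end

section
/- Let H be a nonzero complex Hilbert space and let B, C be bounded linear operators on H. Then w_e(B, C)² ≤ min{ ‖B*B + C*C‖^{1/2}·‖BB* + CC*‖^{1/2}, ‖B*B + CC*‖^{1/2}·‖BB* + C*C‖^{1/2} }, where ‖·‖ denotes the operator norm. -/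
/-! For a unit vector `x`, `|⟨Bx, x⟩|` is bounded both by `‖Bx‖` and by `‖B*x‖`, so
`|⟨Bx, x⟩|² + |⟨Cx, x⟩|² ≤ ‖Bx‖‖B*x‖ + ‖Cx‖‖C*x‖`. Cauchy–Schwarz in `ℝ²` bounds this by
`(‖Bx‖² + ‖Cx‖²)^{1/2} (‖B*x‖² + ‖C*x‖²)^{1/2}`, and `‖Bx‖² + ‖Cx‖² = ⟨(B*B + C*C)x, x⟩`.
The second bound is the first one for the pair `(B, C*)`, which has the same Euclidean radius. -/

open scoped InnerProductSpace
open ContinuousLinearMap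

variable {H : Type*} [NormedAddCommGroup H] [InnerProductSpace ℂ H]
  [CompleteSpace H] [Nontrivial H]

theorem Real.mul_add_mul_le_sqrt_mul_sqrt (a b c d : ℝ) :
    a * b + c * d ≤ √(a ^ 2 + c ^ 2) * √(b ^ 2 + d ^ 2) := by
  simpa [Fin.sum_univ_two] using
    Real.sum_mul_le_sqrt_mul_sqrt Finset.univ ![a, c] ![b, d]

section

variable {𝕜 E : Type*} [RCLike 𝕜] [NormedAddCommGroup E] [InnerProductSpace 𝕜 E]
  [CompleteSpace E]

theorem ContinuousLinearMap.norm_inner_apply_self_sq_le (A : E →L[𝕜] E) (x : E) :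
    ‖⟪A x, x⟫_𝕜‖ ^ 2 ≤ ‖A x‖ * ‖adjoint A x‖ * ‖x‖ ^ 2 := by
  have hA : ‖⟪A x, x⟫_𝕜‖ ≤ ‖A x‖ * ‖x‖ := norm_inner_le_norm _ _
  have hA' : ‖⟪A x, x⟫_𝕜‖ ≤ ‖adjoint A x‖ * ‖x‖ := by
    rw [← adjoint_inner_right, norm_inner_symm]
    exact norm_inner_le_norm _ _
  calc ‖⟪A x, x⟫_𝕜‖ ^ 2 ≤ (‖A x‖ * ‖x‖) * (‖adjoint A x‖ * ‖x‖) := by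
        rw [sq]; exact mul_le_mul hA hA' (norm_nonneg _) (by positivity)
    _ = ‖A x‖ * ‖adjoint A x‖ * ‖x‖ ^ 2 := by ring

theorem ContinuousLinearMap.norm_apply_sq_add_norm_apply_sq_le (A B : E →L[𝕜] E) (x : E) :
    ‖A x‖ ^ 2 + ‖B x‖ ^ 2 ≤ ‖adjoint A * A + adjoint B * B‖ * ‖x‖ ^ 2 :=
  calc ‖A x‖ ^ 2 + ‖B x‖ ^ 2 = RCLike.re ⟪(adjoint A * A + adjoint B * B) x, x⟫_𝕜 := by
        rw [apply_norm_sq_eq_inner_adjoint_left, apply_norm_sq_eq_inner_adjoint_left,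
          add_apply, inner_add_left, map_add]
        rfl
    _ ≤ ‖(adjoint A * A + adjoint B * B) x‖ * ‖x‖ := re_inner_le_norm _ _
    _ ≤ ‖adjoint A * A + adjoint B * B‖ * ‖x‖ ^ 2 := by
        rw [sq, ← mul_assoc]
        exact mul_le_mul_of_nonneg_right (le_opNorm _ _) (norm_nonneg _)

end

section

variable {E : Type*} [NormedAddCommGroup E] [InnerProductSpace ℂ E]

theorem euclRad_sq_le_of_forall {B C : E →L[ℂ] E} {M : ℝ} (hM : 0 ≤ M)
    (h : ∀ x : E, ‖x‖ = 1 → ‖⟪B x, x⟫_ℂ‖ ^ 2 + ‖⟪C x, x⟫_ℂ‖ ^ 2 ≤ M) :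
    euclRad B C ^ 2 ≤ M := by
  have hle : euclRad B C ≤ √M :=
    Real.iSup_le (fun x ↦ Real.sqrt_le_sqrt (h x.1 x.2)) (Real.sqrt_nonneg M)
  have hnn : 0 ≤ euclRad B C := Real.iSup_nonneg fun _ ↦ Real.sqrt_nonneg _
  simpa [Real.sq_sqrt hM] using pow_le_pow_left₀ hnn hle 2

variable [CompleteSpace E]

theorem euclRad_adjoint_right (B C : E →L[ℂ] E) : euclRad B (adjoint C) = euclRad B C := by
  have h : ∀ x : E, ‖⟪adjoint C x, x⟫_ℂ‖ = ‖⟪C x, x⟫_ℂ‖ := fun x ↦ by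
    rw [adjoint_inner_left, norm_inner_symm]
  simp only [euclRad, h]

theorem euclRad_sq_le_sqrt_mul_sqrt (B C : E →L[ℂ] E) :
    euclRad B C ^ 2 ≤
      √‖adjoint B * B + adjoint C * C‖ * √‖B * adjoint B + C * adjoint C‖ := by
  refine euclRad_sq_le_of_forall (by positivity) fun x hx ↦ ?_
  have hB := B.norm_inner_apply_self_sq_le x
  have hC := C.norm_inner_apply_self_sq_le x
  have hBC := norm_apply_sq_add_norm_apply_sq_le B C x
  have hBC' := norm_apply_sq_add_norm_apply_sq_le (adjoint B) (adjoint C) x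
  rw [adjoint_adjoint, adjoint_adjoint] at hBC'
  simp only [hx, one_pow, mul_one] at hB hC hBC hBC'
  calc ‖⟪B x, x⟫_ℂ‖ ^ 2 + ‖⟪C x, x⟫_ℂ‖ ^ 2
      ≤ ‖B x‖ * ‖adjoint B x‖ + ‖C x‖ * ‖adjoint C x‖ := add_le_add hB hC
    _ ≤ √(‖B x‖ ^ 2 + ‖C x‖ ^ 2) * √(‖adjoint B x‖ ^ 2 + ‖adjoint C x‖ ^ 2) :=
        Real.mul_add_mul_le_sqrt_mul_sqrt _ _ _ _
    _ ≤ √‖adjoint B * B + adjoint C * C‖ * √‖B * adjoint B + C * adjoint C‖ := by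
        gcongr

end

theorem stmt3 (B C : H →L[ℂ] H) :
    (euclRad B C) ^ 2 ≤
      min (Real.sqrt ‖adjoint B * B + adjoint C * C‖ *
            Real.sqrt ‖B * adjoint B + C * adjoint C‖)
          (Real.sqrt ‖adjoint B * B + C * adjoint C‖ *
            Real.sqrt ‖B * adjoint B + adjoint C * C‖) := by
  refine le_min (euclRad_sq_le_sqrt_mul_sqrt B C) ?_
  simpa only [euclRad_adjoint_right, adjoint_adjoint] using
    euclRad_sq_le_sqrt_mul_sqrt B (adjoint C)
end

section
/- Let H be a nonzero complex Hilbert space and let B, C be bounded linear operators on H. Then (1/2)·max{ w(B + C)² + c(B − C)², w(B − C)² + c(B + C)² } ≤ w_e(B, C)². -/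
open scoped InnerProductSpace
open ContinuousLinearMap

variable {H : Type*} [NormedAddCommGroup H] [InnerProductSpace ℂ H]
  [CompleteSpace H] [Nontrivial H]

instance : Nonempty {x : H // ‖x‖ = 1} := by
  obtain ⟨v, hv⟩ := exists_ne (0 : H)
  refine ⟨⟨‖v‖⁻¹ • v, ?_⟩⟩
  rw [norm_smul, norm_inv, norm_norm, inv_mul_cancel₀ (norm_ne_zero_iff.mpr hv)]

lemma inner_bound (A : H →L[ℂ] H) (x : {x : H // ‖x‖ = 1}) :
    ‖⟪A x.1, x.1⟫_ℂ‖ ≤ ‖A‖ := by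
  calc ‖⟪A x.1, x.1⟫_ℂ‖ ≤ ‖A x.1‖ * ‖x.1‖ := norm_inner_le_norm _ _
    _ ≤ (‖A‖ * ‖x.1‖) * ‖x.1‖ := by
        have := A.le_opNorm x.1
        nlinarith [norm_nonneg x.1]
    _ = ‖A‖ := by rw [x.2]; ring

lemma numRad_bdd (A : H →L[ℂ] H) :
    BddAbove (Set.range fun x : {x : H // ‖x‖ = 1} => ‖⟪A x.1, x.1⟫_ℂ‖) :=
  ⟨‖A‖, by rintro _ ⟨x, rfl⟩; exact inner_bound A x⟩

lemma crawford_nonneg (A : H →L[ℂ] H) : 0 ≤ crawford A :=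
  le_ciInf fun x => norm_nonneg _

lemma crawford_le (A : H →L[ℂ] H) (x : {x : H // ‖x‖ = 1}) :
    crawford A ≤ ‖⟪A x.1, x.1⟫_ℂ‖ :=
  ciInf_le ⟨0, by rintro _ ⟨y, rfl⟩; exact norm_nonneg _⟩ x

lemma euclRad_bdd (B C : H →L[ℂ] H) :
    BddAbove (Set.range fun x : {x : H // ‖x‖ = 1} =>
      Real.sqrt (‖⟪B x.1, x.1⟫_ℂ‖ ^ 2 + ‖⟪C x.1, x.1⟫_ℂ‖ ^ 2)) := by
  refine ⟨‖B‖ + ‖C‖, ?_⟩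
  rintro _ ⟨x, rfl⟩
  have hb := inner_bound B x
  have hc := inner_bound C x
  have h1 : ‖⟪B x.1, x.1⟫_ℂ‖ ^ 2 + ‖⟪C x.1, x.1⟫_ℂ‖ ^ 2 ≤ (‖B‖ + ‖C‖) ^ 2 := by
    nlinarith [norm_nonneg (⟪B x.1, x.1⟫_ℂ), norm_nonneg (⟪C x.1, x.1⟫_ℂ)]
  calc Real.sqrt (‖⟪B x.1, x.1⟫_ℂ‖ ^ 2 + ‖⟪C x.1, x.1⟫_ℂ‖ ^ 2)
      ≤ Real.sqrt ((‖B‖ + ‖C‖) ^ 2) := Real.sqrt_le_sqrt h1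
    _ = ‖B‖ + ‖C‖ := Real.sqrt_sq (by positivity)

lemma le_euclRad (B C : H →L[ℂ] H) (x : {x : H // ‖x‖ = 1}) :
    Real.sqrt (‖⟪B x.1, x.1⟫_ℂ‖ ^ 2 + ‖⟪C x.1, x.1⟫_ℂ‖ ^ 2) ≤ euclRad B C :=
  le_ciSup (euclRad_bdd B C) x

lemma euclRad_nonneg (B C : H →L[ℂ] H) : 0 ≤ euclRad B C := by
  obtain ⟨x⟩ := (inferInstance : Nonempty {x : H // ‖x‖ = 1})
  exact le_trans (Real.sqrt_nonneg _) (le_euclRad B C x)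

lemma key_ineq (B C : H →L[ℂ] H) :
    numRad (B + C) ^ 2 + crawford (B - C) ^ 2 ≤ 2 * euclRad B C ^ 2 := by
  set c := crawford (B - C) with hc
  set e := euclRad B C with he
  have hc0 : 0 ≤ c := crawford_nonneg _
  have he0 : 0 ≤ e := euclRad_nonneg _ _
  have key_x : ∀ x : {x : H // ‖x‖ = 1},
      ‖⟪(B + C) x.1, x.1⟫_ℂ‖ ^ 2 + ‖⟪(B - C) x.1, x.1⟫_ℂ‖ ^ 2 ≤ 2 * e ^ 2 := by
    intro x
    have h1 : Real.sqrt (‖⟪B x.1, x.1⟫_ℂ‖ ^ 2 + ‖⟪C x.1, x.1⟫_ℂ‖ ^ 2) ≤ e :=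
      le_euclRad B C x
    have h2 : ‖⟪B x.1, x.1⟫_ℂ‖ ^ 2 + ‖⟪C x.1, x.1⟫_ℂ‖ ^ 2 ≤ e ^ 2 := by
      have := Real.sq_sqrt (by positivity :
        (0:ℝ) ≤ ‖⟪B x.1, x.1⟫_ℂ‖ ^ 2 + ‖⟪C x.1, x.1⟫_ℂ‖ ^ 2)
      nlinarith [Real.sqrt_nonneg (‖⟪B x.1, x.1⟫_ℂ‖ ^ 2 + ‖⟪C x.1, x.1⟫_ℂ‖ ^ 2)]
    have hadd : ⟪(B + C) x.1, x.1⟫_ℂ = ⟪B x.1, x.1⟫_ℂ + ⟪C x.1, x.1⟫_ℂ := by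
      simp [inner_add_left]
    have hsub : ⟪(B - C) x.1, x.1⟫_ℂ = ⟪B x.1, x.1⟫_ℂ - ⟪C x.1, x.1⟫_ℂ := by
      simp [inner_sub_left]
    have hpar := parallelogram_law_with_norm ℝ (⟪B x.1, x.1⟫_ℂ) (⟪C x.1, x.1⟫_ℂ)
    rw [hadd, hsub]
    nlinarith [hpar]
  have hM0 : 0 ≤ 2 * e ^ 2 - c ^ 2 := by
    obtain ⟨x⟩ := (inferInstance : Nonempty {x : H // ‖x‖ = 1})
    have h1 := key_x x
    have h2 : c ≤ ‖⟪(B - C) x.1, x.1⟫_ℂ‖ := crawford_le _ x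
    nlinarith [norm_nonneg (⟪(B + C) x.1, x.1⟫_ℂ), norm_nonneg (⟪(B - C) x.1, x.1⟫_ℂ)]
  have hnum : numRad (B + C) ≤ Real.sqrt (2 * e ^ 2 - c ^ 2) := by
    apply ciSup_le
    intro x
    apply Real.le_sqrt_of_sq_le
    have h1 := key_x x
    have h2 : c ≤ ‖⟪(B - C) x.1, x.1⟫_ℂ‖ := crawford_le _ x
    nlinarith [norm_nonneg (⟪(B - C) x.1, x.1⟫_ℂ)]
  have hnum0 : 0 ≤ numRad (B + C) := by
    obtain ⟨x⟩ := (inferInstance : Nonempty {x : H // ‖x‖ = 1})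
    exact le_trans (norm_nonneg _) (le_ciSup (numRad_bdd _) x)
  have : numRad (B + C) ^ 2 ≤ 2 * e ^ 2 - c ^ 2 := by
    have := Real.sq_sqrt hM0
    nlinarith
  linarith

lemma euclRad_neg (B C : H →L[ℂ] H) : euclRad B (-C) = euclRad B C := by
  unfold euclRad
  congr 1
  funext x
  congr 2
  simp [inner_neg_left]

theorem stmt7 (B C : H →L[ℂ] H) :
    (1/2) * max ((numRad (B + C)) ^ 2 + (crawford (B - C)) ^ 2)
                ((numRad (B - C)) ^ 2 + (crawford (B + C)) ^ 2)
      ≤ (euclRad B C) ^ 2 := by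
  have h1 := key_ineq B C
  have h2 := key_ineq B (-C)
  rw [euclRad_neg, ← sub_eq_add_neg, sub_neg_eq_add] at h2
  have := max_le_iff.mpr ⟨h1, h2⟩
  linarith [le_max_left (numRad (B + C) ^ 2 + crawford (B - C) ^ 2)
      (numRad (B - C) ^ 2 + crawford (B + C) ^ 2)]
end

section
/- Let H be a nonzero complex Hilbert space and let B, C be bounded linear operators on H. Then w_e(B + C, B − C)² = 2·w_e(B, C)². -/
open scoped InnerProductSpace
open ContinuousLinearMap

variable {H : Type*} [NormedAddCommGroup H] [InnerProductSpace ℂ H]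
  [CompleteSpace H] [Nontrivial H]

set_option linter.unusedSectionVars false in
lemma euclRad_add_sub (B C : H →L[ℂ] H) :
    euclRad (B + C) (B - C) = Real.sqrt 2 * euclRad B C := by
  rw [euclRad, euclRad, Real.mul_iSup_of_nonneg (Real.sqrt_nonneg 2)]
  congr 1; funext x
  rw [← Real.sqrt_mul (by norm_num)]
  congr 1
  have hb : ⟪(B + C) x.1, x.1⟫_ℂ = ⟪B x.1, x.1⟫_ℂ + ⟪C x.1, x.1⟫_ℂ := by
    simp [inner_add_left]
  have hc : ⟪(B - C) x.1, x.1⟫_ℂ = ⟪B x.1, x.1⟫_ℂ - ⟪C x.1, x.1⟫_ℂ := by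
    simp [inner_sub_left]
  rw [hb, hc]
  have := parallelogram_law_with_norm ℂ (⟪B x.1, x.1⟫_ℂ) (⟪C x.1, x.1⟫_ℂ)
  nlinarith [this]

theorem stmt9 (B C : H →L[ℂ] H) :
    (euclRad (B + C) (B - C)) ^ 2 = 2 * (euclRad B C) ^ 2 := by
  rw [euclRad_add_sub, mul_pow, Real.sq_sqrt (by norm_num : (2:ℝ) ≥ 0)]
end

section
/- Let H be a nonzero complex Hilbert space and let A be a bounded linear operator on H. Then for every α with 0 ≤ α ≤ 1, w(A)² ≤ ‖√α·Re(A) + √(1 − α)·Im(A)‖² + ‖√(1 − α)·Re(A) − √α·Im(A)‖². -/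
open scoped InnerProductSpace
open ContinuousLinearMap

variable {H : Type*} [NormedAddCommGroup H] [InnerProductSpace ℂ H]
  [CompleteSpace H] [Nontrivial H]

/-! For a unit vector `x`, the quadratic forms of `Re A` and `Im A` at `x` are (up to sign) the real
and imaginary parts of `⟪A x, x⟫`, so `‖⟪A x, x⟫‖² = ‖⟪Re A x, x⟫‖² + ‖⟪Im A x, x⟫‖²`. The two
operators on the right-hand side arise from `(Re A, Im A)` through the reflection matrix
`[[a, b], [b, -a]]` with `a = √α`, `b = √(1 - α)`, which multiplies sums of squared moduli by
`a² + b² ≥ 1`. Bounding each quadratic form by the operator norm and taking the supremum over unit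
vectors gives the inequality. -/

theorem Complex.sq_norm_add_sq_norm_reflect (a b : ℝ) (u v : ℂ) :
    ‖a * u + b * v‖ ^ 2 + ‖b * u - a * v‖ ^ 2 = (a ^ 2 + b ^ 2) * (‖u‖ ^ 2 + ‖v‖ ^ 2) := by
  simp only [Complex.sq_norm, Complex.normSq_apply, Complex.add_re, Complex.add_im,
    Complex.sub_re, Complex.sub_im, Complex.mul_re, Complex.mul_im, Complex.ofReal_re,
    Complex.ofReal_im]
  ring

theorem one_le_sq_sqrt_add_sq_sqrt_one_sub (α : ℝ) : 1 ≤ √α ^ 2 + √(1 - α) ^ 2 := by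
  rw [Real.sq_sqrt', Real.sq_sqrt']
  linarith [le_max_left α 0, le_max_left (1 - α) 0]

section

variable {E : Type*} [NormedAddCommGroup E] [InnerProductSpace ℂ E]

theorem ContinuousLinearMap.norm_inner_self_le_opNorm (T : E →L[ℂ] E) {x : E} (hx : ‖x‖ = 1) :
    ‖⟪T x, x⟫_ℂ‖ ≤ ‖T‖ :=
  calc ‖⟪T x, x⟫_ℂ‖ ≤ ‖T x‖ * ‖x‖ := norm_inner_le_norm _ _
    _ ≤ ‖T‖ * ‖x‖ * ‖x‖ := by gcongr; exact T.le_opNorm x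
    _ = ‖T‖ := by rw [hx, mul_one, mul_one]

theorem sq_norm_inner_reflect (R I : E →L[ℂ] E) (a b : ℝ) (x : E) :
    ‖⟪(a • R + b • I) x, x⟫_ℂ‖ ^ 2 + ‖⟪(b • R - a • I) x, x⟫_ℂ‖ ^ 2
      = (a ^ 2 + b ^ 2) * (‖⟪R x, x⟫_ℂ‖ ^ 2 + ‖⟪I x, x⟫_ℂ‖ ^ 2) := by
  simp only [add_apply, sub_apply, smul_apply, inner_add_left, inner_sub_left,
    ← Complex.coe_smul, inner_smul_left, Complex.conj_ofReal]
  exact Complex.sq_norm_add_sq_norm_reflect a b _ _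

theorem inner_adjoint_apply_self [CompleteSpace E] (A : E →L[ℂ] E) (x : E) :
    ⟪adjoint A x, x⟫_ℂ = starRingEnd ℂ ⟪A x, x⟫_ℂ := by
  rw [adjoint_inner_left, inner_conj_symm]

theorem inner_reOp_self [CompleteSpace E] (A : E →L[ℂ] E) (x : E) :
    ⟪reOp A x, x⟫_ℂ = (((⟪A x, x⟫_ℂ).re : ℝ) : ℂ) := by
  simp only [reOp, smul_apply, add_apply, inner_smul_left, inner_add_left,
    inner_adjoint_apply_self]
  rw [Complex.add_conj, map_inv₀, map_ofNat]
  push_cast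
  ring

theorem inner_imOp_self [CompleteSpace E] (A : E →L[ℂ] E) (x : E) :
    ⟪imOp A x, x⟫_ℂ = ((-(⟪A x, x⟫_ℂ).im : ℝ) : ℂ) := by
  simp only [imOp, smul_apply, sub_apply, inner_smul_left, inner_sub_left,
    inner_adjoint_apply_self]
  rw [Complex.sub_conj, map_inv₀, map_mul, map_ofNat, Complex.conj_I]
  field_simp
  push_cast
  ring

theorem sq_norm_inner_reOp_add_sq_norm_inner_imOp [CompleteSpace E] (A : E →L[ℂ] E) (x : E) :
    ‖⟪reOp A x, x⟫_ℂ‖ ^ 2 + ‖⟪imOp A x, x⟫_ℂ‖ ^ 2 = ‖⟪A x, x⟫_ℂ‖ ^ 2 := by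
  rw [inner_reOp_self, inner_imOp_self, Complex.norm_real, Complex.norm_real, Real.norm_eq_abs,
    Real.norm_eq_abs, sq_abs, sq_abs, neg_sq, Complex.sq_norm, Complex.normSq_apply]
  ring

end

theorem stmt15_general (A : H →L[ℂ] H) (α : ℝ) :
    (numRad A) ^ 2 ≤
      ‖Real.sqrt α • reOp A + Real.sqrt (1 - α) • imOp A‖ ^ 2
        + ‖Real.sqrt (1 - α) • reOp A - Real.sqrt α • imOp A‖ ^ 2 := by
  set B := √α • reOp A + √(1 - α) • imOp A
  set C := √(1 - α) • reOp A - √α • imOp A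
  have hnumRad : numRad A ≤ √(‖B‖ ^ 2 + ‖C‖ ^ 2) := by
    refine Real.iSup_le (fun ⟨x, hx⟩ ↦ Real.le_sqrt_of_sq_le ?_) (Real.sqrt_nonneg _)
    calc ‖⟪A x, x⟫_ℂ‖ ^ 2
        ≤ (√α ^ 2 + √(1 - α) ^ 2) * (‖⟪reOp A x, x⟫_ℂ‖ ^ 2 + ‖⟪imOp A x, x⟫_ℂ‖ ^ 2) := by
          rw [sq_norm_inner_reOp_add_sq_norm_inner_imOp]
          exact le_mul_of_one_le_left (by positivity) (one_le_sq_sqrt_add_sq_sqrt_one_sub α)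
      _ = ‖⟪B x, x⟫_ℂ‖ ^ 2 + ‖⟪C x, x⟫_ℂ‖ ^ 2 := (sq_norm_inner_reflect _ _ _ _ x).symm
      _ ≤ ‖B‖ ^ 2 + ‖C‖ ^ 2 := by
          gcongr <;> exact norm_inner_self_le_opNorm _ hx
  have hnonneg : 0 ≤ numRad A := Real.iSup_nonneg fun _ ↦ norm_nonneg _
  exact (Real.le_sqrt hnonneg (by positivity)).1 hnumRad

theorem stmt15 (A : H →L[ℂ] H) (α : ℝ) (h0 : 0 ≤ α) (h1 : α ≤ 1) :
    (numRad A) ^ 2 ≤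
      ‖Real.sqrt α • reOp A + Real.sqrt (1 - α) • imOp A‖ ^ 2
        + ‖Real.sqrt (1 - α) • reOp A - Real.sqrt α • imOp A‖ ^ 2 :=
  stmt15_general A α
end

section
/- Let p ≥ 2 be a real number, let n be a positive integer, and let a₁, …, aₙ be positive real numbers. Then ((1/n)·Σₖ aₖ)^p ≤ (1/n)·Σₖ aₖ^p − (1/n)·Σₖ | aₖ − (1/n)·Σⱼ aⱼ |^p. -/
open scoped InnerProductSpace
open ContinuousLinearMap

variable {H : Type*} [NormedAddCommGroup H] [InnerProductSpace ℂ H]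
  [CompleteSpace H] [Nontrivial H]

/-!
For `x, m ≥ 0` and `p ≥ 2`, `x ^ p` exceeds its tangent line at `m` by at least `|x - m| ^ p`:
the function `x ↦ x ^ p - |x - m| ^ p - p m ^ (p - 1) x` decreases on `[0, m]` and increases on
`[m, ∞)`, because the sign of its derivative is that of a superadditivity defect of
`t ↦ t ^ (p - 1)`. Summing over `x = aₖ` with `m` the mean makes the tangent terms cancel.
-/

open Finset

lemma rpow_tangent_add_rpow_sub_le_rpow {p m x : ℝ} (hp : 2 ≤ p) (hm : 0 ≤ m) (hmx : m ≤ x) :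
    m ^ p + p * m ^ (p - 1) * (x - m) + (x - m) ^ p ≤ x ^ p := by
  have hp1 : 1 ≤ p := by linarith
  have hderiv (y : ℝ) : HasDerivAt (fun y => y ^ p - (y - m) ^ p - p * m ^ (p - 1) * y)
      (p * y ^ (p - 1) - p * (y - m) ^ (p - 1) - p * m ^ (p - 1)) y := by
    have hdev : HasDerivAt (fun y : ℝ => (y - m) ^ p) (p * (y - m) ^ (p - 1)) y := by
      simpa [Function.comp_def] using
        (Real.hasDerivAt_rpow_const (x := y - m) (Or.inr hp1)).comp y
          ((hasDerivAt_id y).sub_const m)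
    exact ((Real.hasDerivAt_rpow_const (Or.inr hp1)).sub hdev).sub
      (by simpa using (hasDerivAt_id y).const_mul (p * m ^ (p - 1)))
  have hmono : MonotoneOn (fun y => y ^ p - (y - m) ^ p - p * m ^ (p - 1) * y) (Set.Ici m) := by
    refine monotoneOn_of_hasDerivWithinAt_nonneg (convex_Ici m)
      (fun y _ => (hderiv y).continuousAt.continuousWithinAt)
      (fun y _ => (hderiv y).hasDerivWithinAt) (fun y hy => ?_)
    rw [interior_Ici, Set.mem_Ioi] at hy
    have := Real.add_rpow_le_rpow_add (sub_nonneg.2 hy.le) hm (by linarith : 1 ≤ p - 1)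
    rw [sub_add_cancel] at this
    nlinarith
  have := hmono Set.self_mem_Ici hmx hmx
  simp only [sub_self, Real.zero_rpow (by linarith : p ≠ 0)] at this
  linarith

lemma rpow_tangent_add_rpow_sub_le_rpow_of_le {p m x : ℝ} (hp : 2 ≤ p) (hx : 0 ≤ x)
    (hxm : x ≤ m) : m ^ p + p * m ^ (p - 1) * (x - m) + (m - x) ^ p ≤ x ^ p := by
  have hp1 : 1 ≤ p := by linarith
  have hderiv (y : ℝ) : HasDerivAt (fun y => y ^ p - (m - y) ^ p - p * m ^ (p - 1) * y)
      (p * y ^ (p - 1) + p * (m - y) ^ (p - 1) - p * m ^ (p - 1)) y := by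
    have hdev : HasDerivAt (fun y : ℝ => (m - y) ^ p) (-(p * (m - y) ^ (p - 1))) y := by
      simpa [Function.comp_def] using
        (Real.hasDerivAt_rpow_const (x := m - y) (Or.inr hp1)).comp y
          ((hasDerivAt_id y).const_sub m)
    exact (((Real.hasDerivAt_rpow_const (Or.inr hp1)).sub hdev).sub
      (by simpa using (hasDerivAt_id y).const_mul (p * m ^ (p - 1)))).congr_deriv (by ring)
  have hanti : AntitoneOn (fun y => y ^ p - (m - y) ^ p - p * m ^ (p - 1) * y) (Set.Icc 0 m) := by
    refine antitoneOn_of_hasDerivWithinAt_nonpos (convex_Icc 0 m)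
      (fun y _ => (hderiv y).continuousAt.continuousWithinAt)
      (fun y _ => (hderiv y).hasDerivWithinAt) (fun y hy => ?_)
    rw [interior_Icc, Set.mem_Ioo] at hy
    have := Real.add_rpow_le_rpow_add hy.1.le (sub_nonneg.2 hy.2.le) (by linarith : 1 ≤ p - 1)
    rw [add_sub_cancel] at this
    nlinarith
  have := hanti ⟨hx, hxm⟩ ⟨hx.trans hxm, le_rfl⟩ hxm
  simp only [sub_self, Real.zero_rpow (by linarith : p ≠ 0)] at this
  linarith

lemma rpow_tangent_add_abs_sub_rpow_le_rpow {p m x : ℝ} (hp : 2 ≤ p) (hm : 0 ≤ m) (hx : 0 ≤ x) :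
    m ^ p + p * m ^ (p - 1) * (x - m) + |x - m| ^ p ≤ x ^ p := by
  rcases le_total m x with hmx | hxm
  · rw [abs_of_nonneg (sub_nonneg.2 hmx)]
    exact rpow_tangent_add_rpow_sub_le_rpow hp hm hmx
  · rw [abs_sub_comm, abs_of_nonneg (sub_nonneg.2 hxm)]
    exact rpow_tangent_add_rpow_sub_le_rpow_of_le hp hx hxm

lemma card_mul_rpow_add_sum_abs_sub_rpow_le_sum_rpow {ι : Type*} [Fintype ι] {p c : ℝ}
    (hp : 2 ≤ p) (a : ι → ℝ) (ha : ∀ k, 0 ≤ a k) (hc : 0 ≤ c)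
    (hsum : ∑ k, a k = Fintype.card ι * c) :
    Fintype.card ι * c ^ p + ∑ k, |a k - c| ^ p ≤ ∑ k, a k ^ p := by
  have htangent : ∑ k, p * c ^ (p - 1) * (a k - c) = 0 := by
    rw [← mul_sum, sum_sub_distrib, hsum, sum_const, card_univ, nsmul_eq_mul, sub_self, mul_zero]
  calc Fintype.card ι * c ^ p + ∑ k, |a k - c| ^ p
      = ∑ k, (c ^ p + p * c ^ (p - 1) * (a k - c) + |a k - c| ^ p) := by
        rw [sum_add_distrib, sum_add_distrib, htangent, sum_const, card_univ, nsmul_eq_mul,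
          add_zero]
    _ ≤ ∑ k, a k ^ p :=
        sum_le_sum fun k _ => rpow_tangent_add_abs_sub_rpow_le_rpow hp hc (ha k)

theorem stmt16 (p : ℝ) (hp : 2 ≤ p) (n : ℕ) (hn : 1 ≤ n)
    (a : Fin n → ℝ) (ha : ∀ k, 0 < a k) :
    ((1 / (n : ℝ)) * ∑ k, a k) ^ p ≤
      (1 / (n : ℝ)) * ∑ k, (a k) ^ p
        - (1 / (n : ℝ)) * ∑ k, |a k - (1 / (n : ℝ)) * ∑ j, a j| ^ p := by
  have hn0 : (0 : ℝ) < n := by exact_mod_cast hn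
  set m := (1 / (n : ℝ)) * ∑ j, a j with hm
  have hm0 : 0 ≤ m := mul_nonneg (by positivity) (sum_nonneg fun k _ => (ha k).le)
  have hsum : ∑ k, a k = Fintype.card (Fin n) * m := by
    rw [Fintype.card_fin, hm]; field_simp
  have key := card_mul_rpow_add_sum_abs_sub_rpow_le_sum_rpow hp a (fun k => (ha k).le) hm0 hsum
  rw [Fintype.card_fin] at key
  rw [← mul_sub, one_div, ← div_eq_inv_mul, le_div_iff₀' hn0]
  linarith
end
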